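/- arXiv:1006.5687 — 9 statements merged into one kernel-verified Lean document; each statement's English description precedes it below -/
import Mathlib

section
/- A topological space X is homeomorphic to the Kato spectrum Spec(M) of some commutative monoid M if and only if the following all hold: (i) X is T₀; (ii) the set of open blobs of X is a base of X which contains X and is closed under finite intersections; (iii) every intersection of irreducible closed subsets of X is the closure of a unique point; and (iv) X satisfies condition (*). -/
open Set Topology TopologicalSpace

universe u v

/-- An ideal of a commutative monoid: closed under multiplication by arbitrary elements. -/
def IsMonoidIdeal {M : Type*} [CommMonoid M] (I : Set M) : Prop :=
  ∀ x ∈ I, ∀ m : M, x * m ∈ I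

/-- A prime ideal of a commutative monoid: an ideal whose complement is a submonoid
(contains `1` and is closed under multiplication). -/
def IsMonoidPrime {M : Type*} [CommMonoid M] (p : Set M) : Prop :=
  IsMonoidIdeal p ∧ (1 : M) ∉ p ∧ ∀ x y : M, x ∉ p → y ∉ p → x * y ∉ p

/-- The Kato spectrum of a commutative monoid: the set of its prime ideals. -/
def KatoSpec (M : Type*) [CommMonoid M] : Type _ :=
  {p : Set M // IsMonoidPrime p}

/-- The basic open set `D(f) = {p : f ∉ p}`. -/
def KatoD {M : Type*} [CommMonoid M] (f : M) : Set (KatoSpec M) :=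
  {p | f ∉ p.1}

/-- The topology on the Kato spectrum, generated by the sets `D(f)`. -/
instance KatoSpec.instTopologicalSpace (M : Type*) [CommMonoid M] :
    TopologicalSpace (KatoSpec M) :=
  TopologicalSpace.generateFrom (Set.range fun f : M => KatoD f)

/-- A blob: the intersection of all open sets containing some point `a`. -/
def IsBlob {X : Type*} [TopologicalSpace X] (A : Set X) : Prop :=
  ∃ a : X, A = ⋂₀ {U : Set X | IsOpen U ∧ a ∈ U}

/-- Condition (*): whenever an intersection of a family of open blobs is contained in an
open set `V`, some finite subfamily already has intersection contained in `V`. -/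
def CondStar (X : Type*) [TopologicalSpace X] : Prop :=
  ∀ S : Set (Set X), (∀ U ∈ S, IsOpen U ∧ IsBlob U) →
    ∀ V : Set X, IsOpen V → ⋂₀ S ⊆ V →
      ∃ T : Finset (Set X), ↑T ⊆ S ∧ ⋂₀ (T : Set (Set X)) ⊆ V

/-- A monoidal base: a base of open sets containing the whole space and closed under
finite (binary) intersections. -/
structure IsMonoidalBase {X : Type*} [TopologicalSpace X] (B : Set (Set X)) : Prop where
  open_mem : ∀ U ∈ B, IsOpen U
  is_base : ∀ V : Set X, IsOpen V → ∀ x ∈ V, ∃ U ∈ B, x ∈ U ∧ U ⊆ V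
  univ_mem : Set.univ ∈ B
  inter_mem : ∀ U ∈ B, ∀ V ∈ B, U ∩ V ∈ B

/-- `(X, B)` is an 𝕄-complete join semilattice with respect to the explicit data of
a partial order `le` and a supremum operator `s`. -/
def IsMCJSWith {X : Type*} (B : Set (Set X)) (le : X → X → Prop) (s : Set X → X) : Prop :=
  (∀ x, le x x) ∧
  (∀ x y z, le x y → le y z → le x z) ∧
  (∀ x y, le x y → le y x → x = y) ∧
  (∀ A : Set X, (∀ a ∈ A, le a (s A)) ∧ ∀ b : X, (∀ a ∈ A, le a b) → le (s A) b) ∧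
  (∀ A : Set X, ∀ U ∈ B, (A ⊆ U ↔ s A ∈ U))

/-- `(X, B)` is an 𝕄-complete join semilattice: there is a partial order on `X` in which
every subset has a least upper bound, such that for `U ∈ B`, `A ⊆ U ↔ sup A ∈ U`. -/
def MCJS {X : Type*} (B : Set (Set X)) : Prop :=
  ∃ (le : X → X → Prop) (s : Set X → X), IsMCJSWith B le s

/-- An isomorphism of spaces-with-monoidal-bases: a bijection such that both it and its
inverse pull back base elements to base elements. -/
def MIso {X Y : Type*} (B : Set (Set X)) (C : Set (Set Y)) : Prop :=
  ∃ f : X → Y, Function.Bijective f ∧ (∀ V ∈ C, f ⁻¹' V ∈ B) ∧ (∀ U ∈ B, f '' U ∈ C)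

/-- The topology on the power set `𝒫(X)` generated by the sets `𝒫(U) = {A | A ⊆ U}`, `U ∈ B`. -/
def ExpTop {X : Type*} (B : Set (Set X)) : TopologicalSpace (Set X) :=
  TopologicalSpace.generateFrom {s : Set (Set X) | ∃ U ∈ B, s = {A : Set X | A ⊆ U}}

/-- The equivalence relation `A ∼ A'` iff `A` and `A'` belong to the same open sets of `𝒫(X)`. -/
def ExpSetoid {X : Type*} (B : Set (Set X)) : Setoid (Set X) where
  r A A' := ∀ s : Set (Set X), (ExpTop B).IsOpen s → (A ∈ s ↔ A' ∈ s)
  iseqv := ⟨fun _ _ _ => Iff.rfl, fun h s hs => (h s hs).symm,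
    fun h h' s hs => (h s hs).trans (h' s hs)⟩

/-- The exponential `E(X,B)`: the quotient of `𝒫(X)` identifying sets lying in the same
open sets. -/
def ExpSpace {X : Type*} (B : Set (Set X)) : Type _ :=
  Quotient (ExpSetoid B)

/-- The class `[A]` of a subset `A ⊆ X` in `E(X,B)`. -/
def expMk {X : Type*} (B : Set (Set X)) (A : Set X) : ExpSpace B :=
  Quotient.mk (ExpSetoid B) A

/-- The quotient topology on `E(X,B)`. -/
instance ExpSpace.instTopologicalSpace {X : Type*} (B : Set (Set X)) :
    TopologicalSpace (ExpSpace B) :=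
  (ExpTop B).coinduced (expMk B)

/-- The basic subset `Ũ = {[A] : A ⊆ U}` of `E(X,B)`. -/
def expBasic {X : Type*} (B : Set (Set X)) (U : Set X) : Set (ExpSpace B) :=
  {q | ∃ A : Set X, q = expMk B A ∧ A ⊆ U}

/-- The monoidal base `B̃ = {Ũ : U ∈ B}` of `E(X,B)`. -/
def expBase {X : Type*} (B : Set (Set X)) : Set (Set (ExpSpace B)) :=
  {s | ∃ U ∈ B, s = expBasic B U}

/-- The natural map `i : X → E(X,B)`, `x ↦ [{x}]`. -/
def expI {X : Type*} (B : Set (Set X)) (x : X) : ExpSpace B :=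
  expMk B {x}

/-- The canonical supremum in `E(X,B)`: the class of the union of all representatives. -/
def expSup {X : Type*} (B : Set (Set X)) (S : Set (ExpSpace B)) : ExpSpace B :=
  expMk B (⋃₀ {A : Set X | expMk B A ∈ S})

/-- The specialization order: `a ≤ b` iff `b ∈ closure {a}`. -/
def specLE {Y : Type*} [TopologicalSpace Y] (a b : Y) : Prop :=
  b ∈ closure {a}

/-- The commutative monoid `(B, ∩)` attached to a monoidal base `B`, with identity `X`. -/
def baseMonoid {X : Type*} [TopologicalSpace X] {B : Set (Set X)} (hB : IsMonoidalBase B) :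
    CommMonoid ↥B where
  mul U V := ⟨U.1 ∩ V.1, hB.inter_mem _ U.2 _ V.2⟩
  one := ⟨Set.univ, hB.univ_mem⟩
  mul_assoc U V W := Subtype.ext (Set.inter_assoc _ _ _)
  mul_comm U V := Subtype.ext (Set.inter_comm _ _)
  one_mul U := Subtype.ext (Set.univ_inter _)
  mul_one U := Subtype.ext (Set.inter_univ _)


section BlobFacts

theorem blob_mem_and_min {X : Type*} [TopologicalSpace X] {A : Set X} (a : X)
    (h : A = ⋂₀ {U : Set X | IsOpen U ∧ a ∈ U}) :
    a ∈ A ∧ ∀ O : Set X, IsOpen O → a ∈ O → A ⊆ O := by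
  constructor
  · rw [h]; exact fun U hU => hU.2
  · intro O hO haO; rw [h]; exact sInter_subset_of_mem ⟨hO, haO⟩

end BlobFacts

section KatoLemmas

variable {M : Type*} [CommMonoid M]

theorem isOpen_KatoD (f : M) : IsOpen (KatoD f) :=
  TopologicalSpace.isOpen_generateFrom_of_mem ⟨f, rfl⟩

theorem KatoD_one : KatoD (1 : M) = univ := by
  ext q; simp [KatoD, q.2.2.1]

theorem KatoD_mul (f g : M) : KatoD (f * g) = KatoD f ∩ KatoD g := by
  ext q
  obtain ⟨hI, -, hP⟩ := q.2
  simp only [KatoD, mem_setOf_eq, mem_inter_iff]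
  constructor
  · intro h
    refine ⟨fun hf => h ?_, fun hg => h ?_⟩
    · exact hI f hf g
    · simpa [mul_comm] using hI g hg f
  · rintro ⟨hf, hg⟩; exact hP f g hf hg

theorem kato_basis :
    TopologicalSpace.IsTopologicalBasis (Set.range fun f : M => KatoD f) := by
  refine ⟨?_, ?_, rfl⟩
  · rintro _ ⟨f, rfl⟩ _ ⟨g, rfl⟩ q hq
    exact ⟨KatoD (f * g), ⟨f * g, rfl⟩, by rwa [KatoD_mul], by rw [KatoD_mul]⟩
  · apply eq_univ_of_univ_subset
    intro q _
    exact ⟨KatoD 1, ⟨1, rfl⟩, q.2.2.1⟩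

theorem kato_mem_open {U : Set (KatoSpec M)} (hU : IsOpen U) {q : KatoSpec M} (hq : q ∈ U) :
    ∃ f : M, q ∈ KatoD f ∧ KatoD f ⊆ U := by
  obtain ⟨_, ⟨f, rfl⟩, h1, h2⟩ := kato_basis.exists_subset_of_mem_open hq hU
  exact ⟨f, h1, h2⟩

theorem pow_not_mem {q : Set M} (hq : IsMonoidPrime q) {f : M} (hf : f ∉ q) (k : ℕ) :
    f ^ k ∉ q := by
  induction k with
  | zero => simpa using hq.2.1
  | succ n ih => rw [pow_succ]; exact hq.2.2 _ _ ih hf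

/-- The "generic point" of `D(f)`: the set of elements dividing no power of `f`. -/
def katoPt (f : M) : Set M := {m | ¬ ∃ n : M, ∃ k : ℕ, m * n = f ^ k}

theorem katoPt_prime (f : M) : IsMonoidPrime (katoPt f) := by
  refine ⟨?_, ?_, ?_⟩
  · rintro x hx m ⟨n, k, h⟩
    exact hx ⟨m * n, k, by rwa [mul_assoc] at h⟩
  · intro h; exact h ⟨1, 0, by simp⟩
  · intro x y hx hy
    simp only [katoPt, mem_setOf_eq, not_not] at hx hy ⊢
    obtain ⟨n, k, h⟩ := hx; obtain ⟨n', k', h'⟩ := hy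
    exact ⟨n * n', k + k', by rw [mul_mul_mul_comm, h, h', pow_add]⟩

theorem self_not_mem_katoPt (f : M) : f ∉ katoPt f := by
  simp only [katoPt, mem_setOf_eq, not_not]
  exact ⟨1, 1, by simp⟩

/-- The generic point of `D(f)` as a point of the spectrum. -/
def katoGeneric (f : M) : KatoSpec M := ⟨katoPt f, katoPt_prime f⟩

theorem KatoD_blob_eq (f : M) :
    KatoD f = ⋂₀ {U : Set (KatoSpec M) | IsOpen U ∧ katoGeneric f ∈ U} := by
  apply Subset.antisymm
  · intro q hq
    rintro U ⟨hUo, hU⟩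
    obtain ⟨g, hg1, hg2⟩ := kato_mem_open hUo hU
    obtain ⟨n, k, h⟩ : ∃ n : M, ∃ k : ℕ, g * n = f ^ k := not_not.mp hg1
    apply hg2
    intro hgq
    exact pow_not_mem q.2 hq k (h ▸ q.2.1 g hgq n)
  · intro q hq
    exact hq (KatoD f) ⟨isOpen_KatoD f, self_not_mem_katoPt f⟩

theorem isBlob_KatoD (f : M) : IsBlob (KatoD f) := ⟨katoGeneric f, KatoD_blob_eq f⟩

theorem exists_KatoD_of_openBlob {U : Set (KatoSpec M)} (hU : IsOpen U) (hb : IsBlob U) :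
    ∃ f : M, U = KatoD f := by
  obtain ⟨a, ha⟩ := hb
  obtain ⟨haU, hmin⟩ := blob_mem_and_min a ha
  obtain ⟨f, hf1, hf2⟩ := kato_mem_open hU haU
  exact ⟨f, Subset.antisymm (hmin _ (isOpen_KatoD f) hf1) hf2⟩

theorem kato_monoidalBase :
    IsMonoidalBase {U : Set (KatoSpec M) | IsOpen U ∧ IsBlob U} := by
  constructor
  · exact fun U hU => hU.1
  · intro V hV x hx
    obtain ⟨f, h1, h2⟩ := kato_mem_open hV hx
    exact ⟨KatoD f, ⟨isOpen_KatoD f, isBlob_KatoD f⟩, h1, h2⟩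
  · exact ⟨isOpen_univ, KatoD_one (M := M) ▸ isBlob_KatoD (1 : M)⟩
  · intro U hU V hV
    obtain ⟨f, rfl⟩ := exists_KatoD_of_openBlob hU.1 hU.2
    obtain ⟨g, rfl⟩ := exists_KatoD_of_openBlob hV.1 hV.2
    rw [← KatoD_mul]
    exact ⟨isOpen_KatoD _, isBlob_KatoD _⟩

theorem kato_closure (p : KatoSpec M) : closure {p} = {q : KatoSpec M | p.1 ⊆ q.1} := by
  ext q
  rw [mem_closure_iff]
  constructor
  · intro h m hm
    by_contra hmq
    obtain ⟨r, hr1, hr2⟩ := h (KatoD m) (isOpen_KatoD m) hmq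
    rw [mem_singleton_iff] at hr2; subst hr2; exact hr1 hm
  · intro h o ho hqo
    obtain ⟨f, h1, h2⟩ := kato_mem_open ho hqo
    exact ⟨p, h2 (fun hfp => h1 (h hfp)), rfl⟩

theorem kato_t0 : T0Space (KatoSpec M) := by
  rw [t0Space_iff_inseparable]
  intro p q h
  have hc := inseparable_iff_closure_eq.mp h
  have h1 : q ∈ closure ({p} : Set (KatoSpec M)) := by
    rw [hc]; exact subset_closure rfl
  have h2 : p ∈ closure ({q} : Set (KatoSpec M)) := by
    rw [← hc]; exact subset_closure rfl
  rw [kato_closure] at h1 h2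
  exact Subtype.ext (Subset.antisymm h1 h2)

theorem kato_irr_inter (𝒮 : Set (Set (KatoSpec M)))
    (h𝒮 : ∀ C ∈ 𝒮, IsClosed C ∧ IsIrreducible C) :
    ∃! x : KatoSpec M, ⋂₀ 𝒮 = closure {x} := by
  have mem_of_closed : ∀ {C : Set (KatoSpec M)}, IsClosed C → ∀ {q : KatoSpec M},
      (∀ m : M, (∀ r ∈ C, m ∈ (r : KatoSpec M).1) → m ∈ q.1) → q ∈ C := by
    intro C hC q h
    by_contra hq
    obtain ⟨f, h1, h2⟩ := kato_mem_open hC.isOpen_compl hq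
    exact h1 (h f (fun r hr => not_not.mp (fun hfr => h2 hfr hr)))
  set J : Set M := {m | ∃ C ∈ 𝒮, ∀ q ∈ C, m ∈ (q : KatoSpec M).1} with hJ
  have hJprime : IsMonoidPrime J := by
    refine ⟨?_, ?_, ?_⟩
    · rintro x ⟨C, hC, hx⟩ m
      exact ⟨C, hC, fun q hq => q.2.1 x (hx q hq) m⟩
    · rintro ⟨C, hC, h1⟩
      obtain ⟨q, hq⟩ := (h𝒮 C hC).2.1
      exact q.2.2.1 (h1 q hq)
    · intro a b ha hb
      rintro ⟨C, hC, hab⟩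
      have hCa : ∃ q ∈ C, a ∉ (q : KatoSpec M).1 := by
        by_contra h; push_neg at h; exact ha ⟨C, hC, h⟩
      have hCb : ∃ q ∈ C, b ∉ (q : KatoSpec M).1 := by
        by_contra h; push_neg at h; exact hb ⟨C, hC, h⟩
      obtain ⟨q1, hq1C, hq1⟩ := hCa
      obtain ⟨q2, hq2C, hq2⟩ := hCb
      obtain ⟨q, hqC, hqa, hqb⟩ := (h𝒮 C hC).2.2 (KatoD a) (KatoD b)
        (isOpen_KatoD a) (isOpen_KatoD b) ⟨q1, hq1C, hq1⟩ ⟨q2, hq2C, hq2⟩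
      exact q.2.2.2 a b hqa hqb (hab q hqC)
  obtain ⟨x0, hx0⟩ : ∃ x : KatoSpec M, x.1 = J := ⟨⟨J, hJprime⟩, rfl⟩
  have hxeq : ⋂₀ 𝒮 = closure {x0} := by
    rw [kato_closure, hx0]
    ext q
    rw [mem_sInter]
    constructor
    · intro hq
      rintro m ⟨C, hC, hm⟩
      exact hm q (hq C hC)
    · intro hq C hC
      exact mem_of_closed (h𝒮 C hC).1 (fun m hm => hq ⟨C, hC, hm⟩)
  refine ⟨x0, hxeq, ?_⟩
  intro y hy
  have h1 : y ∈ closure ({y} : Set (KatoSpec M)) := subset_closure rfl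
  have h2 : x0 ∈ closure ({x0} : Set (KatoSpec M)) := subset_closure rfl
  rw [← hy, hxeq, kato_closure] at h1
  rw [← hxeq, hy, kato_closure] at h2
  exact Subtype.ext (Subset.antisymm h2 h1)

theorem kato_condStar : CondStar (KatoSpec M) := by
  intro S hS V hV hsub
  classical
  set F : Set M := {f | KatoD f ∈ S} with hF
  set P : Set M := {m | ¬ ∃ n : M, m * n ∈ Submonoid.closure F} with hP
  have hPprime : IsMonoidPrime P := by
    refine ⟨?_, ?_, ?_⟩
    · rintro x hx m ⟨n, hn⟩
      exact hx ⟨m * n, by rwa [mul_assoc] at hn⟩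
    · intro h
      exact h ⟨1, by simpa using Submonoid.one_mem (Submonoid.closure F)⟩
    · intro x y hx hy
      simp only [hP, mem_setOf_eq, not_not] at hx hy ⊢
      obtain ⟨n, hn⟩ := hx; obtain ⟨n', hn'⟩ := hy
      exact ⟨n * n', by rw [mul_mul_mul_comm]; exact Submonoid.mul_mem _ hn hn'⟩
  have hPS : (⟨P, hPprime⟩ : KatoSpec M) ∈ ⋂₀ S := by
    refine mem_sInter.mpr ?_
    intro U hU
    obtain ⟨f, rfl⟩ := exists_KatoD_of_openBlob (hS U hU).1 (hS U hU).2
    intro hfP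
    exact hfP ⟨1, by rw [mul_one]; exact Submonoid.subset_closure hU⟩
  obtain ⟨g, hg1, hg2⟩ := kato_mem_open hV (hsub hPS)
  obtain ⟨n, hn⟩ : ∃ n : M, g * n ∈ Submonoid.closure F := not_not.mp hg1
  have key : ∀ m ∈ Submonoid.closure F, ∃ T : Finset (Set (KatoSpec M)),
      ↑T ⊆ S ∧ ⋂₀ (T : Set (Set (KatoSpec M))) ⊆ KatoD m := by
    intro m hm
    induction hm using Submonoid.closure_induction with
    | mem x hx => exact ⟨{KatoD x}, by simpa using (show KatoD x ∈ S from hx), by simp⟩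
    | one => exact ⟨∅, by simp, by simp [KatoD_one]⟩
    | mul x y hx hy ihx ihy =>
      obtain ⟨T1, hT1, hT1s⟩ := ihx
      obtain ⟨T2, hT2, hT2s⟩ := ihy
      refine ⟨T1 ∪ T2, ?_, ?_⟩
      · rw [Finset.coe_union]; exact union_subset hT1 hT2
      · rw [Finset.coe_union, sInter_union, KatoD_mul]
        exact inter_subset_inter hT1s hT2s
  obtain ⟨T, hTS, hTsub⟩ := key _ hn
  refine ⟨T, hTS, fun q hq => hg2 ?_⟩
  intro hgq
  exact hTsub hq (q.2.1 g hgq n)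

end KatoLemmas
section Transfer

variable {X : Type u} {Y : Type v} [TopologicalSpace X] [TopologicalSpace Y]

theorem isBlob_preimage (e : X ≃ₜ Y) {A : Set Y} (h : IsBlob A) : IsBlob (e ⁻¹' A) := by
  obtain ⟨b, rfl⟩ := h
  refine ⟨e.symm b, ?_⟩
  ext x
  simp only [mem_preimage, mem_sInter, mem_setOf_eq, and_imp]
  constructor
  · intro h U hU hb
    have h1 : IsOpen (e.symm ⁻¹' U) := e.symm.isOpen_preimage.mpr hU
    have h2 : b ∈ e.symm ⁻¹' U := by simpa using hb
    have := h _ h1 h2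
    simpa using this
  · intro h U hU hb
    have h1 : IsOpen (e ⁻¹' U) := e.isOpen_preimage.mpr hU
    have h2 : e.symm b ∈ e ⁻¹' U := by simpa using hb
    exact h _ h1 h2

theorem good_transfer (e : X ≃ₜ Y)
    (h : T0Space Y ∧ IsMonoidalBase {U : Set Y | IsOpen U ∧ IsBlob U} ∧
      (∀ 𝒮 : Set (Set Y), (∀ C ∈ 𝒮, IsClosed C ∧ IsIrreducible C) →
        ∃! y : Y, ⋂₀ 𝒮 = closure {y}) ∧ CondStar Y) :
    T0Space X ∧ IsMonoidalBase {U : Set X | IsOpen U ∧ IsBlob U} ∧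
      (∀ 𝒮 : Set (Set X), (∀ C ∈ 𝒮, IsClosed C ∧ IsIrreducible C) →
        ∃! x : X, ⋂₀ 𝒮 = closure {x}) ∧ CondStar X := by
  obtain ⟨hT0, hBase, hIrr, hStar⟩ := h
  haveI : T0Space Y := hT0
  have key : ∀ U : Set X, e ⁻¹' (e.symm ⁻¹' U) = U := by
    intro U; ext x; simp
  have hpre : ∀ W : Set Y, IsOpen W ∧ IsBlob W → IsOpen (e ⁻¹' W) ∧ IsBlob (e ⁻¹' W) :=
    fun W hW => ⟨e.isOpen_preimage.mpr hW.1, isBlob_preimage e hW.2⟩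
  have hpre' : ∀ U : Set X, IsOpen U ∧ IsBlob U →
      IsOpen (e.symm ⁻¹' U) ∧ IsBlob (e.symm ⁻¹' U) :=
    fun U hU => ⟨e.symm.isOpen_preimage.mpr hU.1, isBlob_preimage e.symm hU.2⟩
  have hT0X : T0Space X := e.isEmbedding.t0Space
  refine ⟨hT0X, ?_, ?_, ?_⟩
  · constructor
    · exact fun U hU => hU.1
    · intro V hV x hx
      have hV' : IsOpen (e.symm ⁻¹' V) := e.symm.isOpen_preimage.mpr hV
      obtain ⟨W, hWmem, hW1, hW2⟩ := hBase.is_base _ hV' (e x) (by simpa using hx)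
      refine ⟨e ⁻¹' W, hpre W hWmem, hW1, ?_⟩
      intro y hy
      have := hW2 hy
      simpa using this
    · have := hpre univ hBase.univ_mem
      rwa [preimage_univ] at this
    · intro U hU V hV
      have h3 := hpre _ (hBase.inter_mem _ (hpre' U hU) _ (hpre' V hV))
      rwa [preimage_inter, key, key] at h3
  · intro 𝒮 h𝒮
    set 𝒮' : Set (Set Y) := (fun C => e.symm ⁻¹' C) '' 𝒮 with h𝒮'def
    have h𝒮' : ∀ C ∈ 𝒮', IsClosed C ∧ IsIrreducible C := by
      rintro _ ⟨C, hC, rfl⟩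
      obtain ⟨h1, h2⟩ := h𝒮 C hC
      refine ⟨h1.preimage e.symm.continuous, ?_⟩
      have him : e.symm ⁻¹' C = e '' C := by
        ext y
        constructor
        · intro hy; exact ⟨e.symm y, hy, e.apply_symm_apply y⟩
        · rintro ⟨x, hx, rfl⟩; simpa using hx
      show IsIrreducible (e.symm ⁻¹' C)
      rw [him]
      exact h2.image e e.continuous.continuousOn
    obtain ⟨y, hy, hyuniq⟩ := hIrr 𝒮' h𝒮'
    have hsInter : ⋂₀ 𝒮' = e.symm ⁻¹' (⋂₀ 𝒮) := by
      rw [h𝒮'def, sInter_image, preimage_sInter]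
    have hys : e ⁻¹' ({y} : Set Y) = {e.symm y} := by
      ext x
      constructor
      · intro hx
        simp only [mem_preimage, mem_singleton_iff] at hx
        simp [← hx]
      · intro hx
        simp only [mem_singleton_iff] at hx
        simp [hx, mem_preimage]
    have hx0 : ⋂₀ 𝒮 = closure {e.symm y} := by
      have h5 := congrArg (fun s => e ⁻¹' s) hy
      rw [hsInter, key] at h5
      rw [h5, ← hys, ← Homeomorph.preimage_closure]
    refine ⟨e.symm y, hx0, fun x' hx' => ?_⟩
    have hcc : closure ({x'} : Set X) = closure ({e.symm y} : Set X) := by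
      rw [← hx', ← hx0]
    exact (inseparable_iff_closure_eq.mpr hcc).eq
  · intro S hS V hV hsub
    classical
    set S' : Set (Set Y) := (fun U => e.symm ⁻¹' U) '' S with hS'def
    have hS' : ∀ U ∈ S', IsOpen U ∧ IsBlob U := by
      rintro _ ⟨U, hU, rfl⟩
      exact hpre' U (hS U hU)
    have hsub' : ⋂₀ S' ⊆ e.symm ⁻¹' V := by
      rw [hS'def, sInter_image, ← preimage_sInter]
      exact preimage_mono hsub
    obtain ⟨T', hT'S, hT'⟩ := hStar S' hS' _ (e.symm.isOpen_preimage.mpr hV) hsub'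
    refine ⟨T'.image (fun W => e ⁻¹' W), ?_, ?_⟩
    · intro U hU
      simp only [Finset.coe_image, mem_image, Finset.mem_coe] at hU
      obtain ⟨W, hW, rfl⟩ := hU
      obtain ⟨U0, hU0, rfl⟩ := hT'S hW
      rw [key]; exact hU0
    · intro q hq
      rw [mem_sInter] at hq
      have hq' : e q ∈ ⋂₀ (T' : Set (Set Y)) := by
        rw [mem_sInter]
        intro W hW
        have := hq (e ⁻¹' W) (by
          simp only [Finset.coe_image, mem_image, Finset.mem_coe]
          exact ⟨W, hW, rfl⟩)
        exact this
      have h2 := hT' hq'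
      simpa using h2

end Transfer
/-- Brenner's theorem, Theorem 1.4 of the paper: a topological space is
homeomorphic to the Kato spectrum of a commutative monoid iff it is `T₀`, its open blobs
form a monoidal base, every intersection of irreducible closed subsets is the closure of
a unique point, and condition (*) holds. -/
theorem stmt0 {X : Type u} [TopologicalSpace X] :
    (∃ (M : Type u) (_ : CommMonoid M), Nonempty (X ≃ₜ KatoSpec M)) ↔
      (T0Space X ∧
        IsMonoidalBase {U : Set X | IsOpen U ∧ IsBlob U} ∧
        (∀ 𝒮 : Set (Set X), (∀ C ∈ 𝒮, IsClosed C ∧ IsIrreducible C) →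
          ∃! x : X, ⋂₀ 𝒮 = closure {x}) ∧
        CondStar X) := by
  constructor
  · rintro ⟨M, hM, ⟨e⟩⟩
    exact good_transfer e ⟨kato_t0, kato_monoidalBase, kato_irr_inter, kato_condStar⟩
  · rintro ⟨hT0, hBase, -, hStar⟩
    haveI := hT0
    classical
    set B : Set (Set X) := {U : Set X | IsOpen U ∧ IsBlob U} with hBdef
    letI : CommMonoid ↥B := baseMonoid hBase
    have hone : ((1 : ↥B) : Set X) = univ := rfl
    have hmul : ∀ U W : ↥B, ((U * W : ↥B) : Set X) = (U : Set X) ∩ (W : Set X) :=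
      fun U W => rfl
    have hprime : ∀ x : X, IsMonoidPrime {U : ↥B | x ∉ (U : Set X)} := by
      intro x
      refine ⟨?_, ?_, ?_⟩
      · intro U hU W hmem
        rw [hmul] at hmem
        exact hU hmem.1
      · intro h
        exact h (hone ▸ mem_univ x)
      · intro U W hU hW
        simp only [mem_setOf_eq, not_not] at hU hW ⊢
        rw [hmul]
        exact ⟨hU, hW⟩
    set φ : X → KatoSpec ↥B := fun x => ⟨{U : ↥B | x ∉ (U : Set X)}, hprime x⟩ with hφ
    have hφ_mem : ∀ (x : X) (U : ↥B), U ∈ (φ x).1 ↔ x ∉ (U : Set X) := fun _ _ => Iff.rfl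
    have hinj : Function.Injective φ := by
      intro x y hxy
      by_contra hne
      obtain ⟨U, hUo, hU⟩ := exists_isOpen_xor'_mem hne
      rcases hU with ⟨hx, hy⟩ | ⟨hy, hx⟩
      · obtain ⟨W, hWB, hxW, hWU⟩ := hBase.is_base U hUo x hx
        have h1 : (⟨W, hWB⟩ : ↥B) ∈ (φ y).1 := fun h => hy (hWU h)
        rw [← hxy] at h1
        exact h1 hxW
      · obtain ⟨W, hWB, hyW, hWU⟩ := hBase.is_base U hUo y hy
        have h1 : (⟨W, hWB⟩ : ↥B) ∈ (φ x).1 := fun h => hx (hWU h)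
        rw [hxy] at h1
        exact h1 hyW
    have hsurj : Function.Surjective φ := by
      intro p
      set 𝒰 : Set (Set X) := {s | ∃ U : ↥B, U ∉ p.1 ∧ s = (U : Set X)} with h𝒰
      set V : Set X := ⋃₀ {s | ∃ U : ↥B, U ∈ p.1 ∧ s = (U : Set X)} with hV
      have hVopen : IsOpen V := by
        apply isOpen_sUnion
        rintro _ ⟨U, -, rfl⟩
        exact hBase.open_mem _ U.2
      have hnot : ¬ (⋂₀ 𝒰 ⊆ V) := by
        intro hsub
        have h𝒰blob : ∀ s ∈ 𝒰, IsOpen s ∧ IsBlob s := by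
          rintro _ ⟨U, -, rfl⟩
          exact U.2
        obtain ⟨T, hTS, hTsub⟩ := hStar 𝒰 h𝒰blob V hVopen hsub
        have hW : ∀ T : Finset (Set X), ↑T ⊆ 𝒰 →
            ∃ W : ↥B, W ∉ p.1 ∧ (W : Set X) = ⋂₀ (T : Set (Set X)) := by
          intro T
          induction T using Finset.induction_on with
          | empty =>
            intro _
            exact ⟨1, p.2.2.1, by rw [hone]; simp⟩
          | insert a T hnotmem ih =>
            intro hins
            have ha : a ∈ 𝒰 := hins (by simp)
            obtain ⟨U, hUp, rfl⟩ := ha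
            obtain ⟨W, hWp, hWeq⟩ := ih (fun t ht => hins (by simp [ht]))
            refine ⟨U * W, p.2.2.2 U W hUp hWp, ?_⟩
            rw [Finset.coe_insert, sInter_insert, ← hWeq, hmul]
        obtain ⟨W, hWp, hWeq⟩ := hW T hTS
        obtain ⟨a, ha⟩ := W.2.2
        obtain ⟨haW, hmin⟩ := blob_mem_and_min a ha
        have haV : a ∈ V := hTsub (hWeq ▸ haW)
        obtain ⟨s, hs, has⟩ := haV
        obtain ⟨U, hUp, rfl⟩ := hs
        have hWU : (W : Set X) ⊆ (U : Set X) := hmin _ (hBase.open_mem _ U.2) has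
        have : U * W = W := by
          apply Subtype.ext
          rw [hmul]
          exact inter_eq_self_of_subset_right hWU
        exact hWp (this ▸ p.2.1 U hUp W)
      obtain ⟨x, hx𝒰, hxV⟩ := not_subset.mp hnot
      refine ⟨x, ?_⟩
      apply Subtype.ext
      ext U
      rw [hφ_mem]
      constructor
      · intro hU
        by_contra hUp
        exact hU (mem_sInter.mp hx𝒰 _ ⟨U, hUp, rfl⟩)
      · intro hUp hxU
        exact hxV (mem_sUnion.mpr ⟨(U : Set X), ⟨U, hUp, rfl⟩, hxU⟩)
    have hcont : Continuous φ := by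
      apply continuous_generateFrom_iff.mpr
      rintro s ⟨U, rfl⟩
      have hpre : φ ⁻¹' KatoD U = (U : Set X) := by
        ext x
        show ¬ x ∉ (U : Set X) ↔ x ∈ (U : Set X)
        exact not_not
      rw [hpre]
      exact hBase.open_mem _ U.2
    have hopen : IsOpenMap φ := by
      intro O hO
      rw [isOpen_iff_forall_mem_open]
      rintro q ⟨x, hxO, rfl⟩
      obtain ⟨W, hWB, hxW, hWO⟩ := hBase.is_base O hO x hxO
      refine ⟨KatoD (⟨W, hWB⟩ : ↥B), ?_, isOpen_KatoD _, not_not.mpr hxW⟩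
      intro r hr
      obtain ⟨y, rfl⟩ := hsurj r
      exact ⟨y, hWO (not_not.mp hr), rfl⟩
    exact ⟨↥B, inferInstance,
      ⟨Equiv.toHomeomorphOfContinuousOpen (Equiv.ofBijective φ ⟨hinj, hsurj⟩) hcont hopen⟩⟩
end

section
/- Let X be a T₀ space with a monoidal base B, and suppose ≤ is a partial order on X making (X, B) an 𝕄-complete join semilattice. Then ≤ is the specialization order on X: for all x, y ∈ X, x ≤ y if and only if y ∈ cl({x}) (equivalently, every open set containing y contains x). -/
open Set Topology TopologicalSpace

universe u v

/-- if a partial order (with suprema) makes `(X, B)` an 𝕄-complete join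
semilattice, then that order is the specialization order: `x ≤ y ↔ y ∈ closure {x}`. -/
theorem stmt3 {X : Type u} [TopologicalSpace X] [T0Space X]
    (B : Set (Set X)) (hB : IsMonoidalBase B)
    (le : X → X → Prop) (s : Set X → X)
    (h : IsMCJSWith B le s) :
    ∀ x y : X, le x y ↔ y ∈ closure {x} := by
  obtain ⟨hrefl, htrans, hanti, hsup, hbase⟩ := h
  intro x y
  -- helper: membership in closure {x} is: every open containing y contains x
  have hclos : y ∈ closure {x} ↔ ∀ V : Set X, IsOpen V → y ∈ V → x ∈ V := by
    constructor
    · intro hy V hV hyV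
      have := (mem_closure_iff.mp hy) V hV hyV
      obtain ⟨z, hz, rfl⟩ := this
      exact hz
    · intro hall
      rw [mem_closure_iff]
      intro V hV hyV
      exact ⟨x, hall V hV hyV, rfl⟩
  constructor
  · intro hxy
    -- sup {x,y} = y
    have h1 := (hsup {x, y}).1
    have h2 := (hsup {x, y}).2
    have hsy : s {x, y} = y := by
      apply hanti
      · refine h2 y ?_
        intro a ha
        rcases ha with ha | ha
        · rw [ha]; exact hxy
        · rw [ha]; exact hrefl y
      · exact h1 y (by right; rfl)
    rw [hclos]
    intro V hV hyV
    obtain ⟨U, hUB, hyU, hUV⟩ := hB.is_base V hV y hyV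
    have : ({x, y} : Set X) ⊆ U := (hbase {x, y} U hUB).2 (by rw [hsy]; exact hyU)
    exact hUV (this (by left; rfl))
  · intro hy
    rw [hclos] at hy
    -- s {x,y} and y are in the same base opens, hence inseparable, hence equal
    have key : ∀ U ∈ B, s {x, y} ∈ U ↔ y ∈ U := by
      intro U hU
      rw [← hbase {x, y} U hU]
      constructor
      · intro hsub; exact hsub (by right; rfl)
      · intro hyU a ha
        rcases ha with ha | ha
        · rw [ha]; exact hy U (hB.open_mem U hU) hyU
        · rw [ha]; exact hyU
    have hopens : ∀ V : Set X, IsOpen V → (s {x, y} ∈ V ↔ y ∈ V) := by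
      intro V hV
      constructor
      · intro hsV
        obtain ⟨U, hUB, hmU, hUV⟩ := hB.is_base V hV _ hsV
        exact hUV ((key U hUB).1 hmU)
      · intro hyV
        obtain ⟨U, hUB, hmU, hUV⟩ := hB.is_base V hV _ hyV
        exact hUV ((key U hUB).2 hmU)
    have heq : s {x, y} = y := by
      apply Inseparable.eq
      rw [inseparable_iff_forall_isOpen]
      exact hopens
    have := (hsup {x, y}).1 x (by left; rfl)
    rwa [heq] at this
end

section
/- Let X be a T₀ space with a monoidal base B. The natural map i : X → E(X,B) sending x to the class [{x}] is injective, and its image is dense in E(X,B) \ {[∅]}. -/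
open Set Topology TopologicalSpace

universe u v

lemma expTop_down {X : Type u} {B : Set (Set X)} {t : Set (Set X)}
    (ht : (ExpTop B).IsOpen t) : ∀ A ∈ t, ∀ A' : Set X, A' ⊆ A → A' ∈ t := by
  have ht' : TopologicalSpace.GenerateOpen {s : Set (Set X) | ∃ U ∈ B, s = {A : Set X | A ⊆ U}} t := ht
  clear ht
  induction ht' with
  | basic s hs =>
    obtain ⟨U, _, rfl⟩ := hs
    intro A hA A' h
    exact h.trans hA
  | univ => intros; trivial
  | inter s t _ _ ihs iht =>
    intro A hA A' h
    exact ⟨ihs A hA.1 A' h, iht A hA.2 A' h⟩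
  | sUnion S _ ih =>
    intro A hA A' h
    obtain ⟨s, hs, hAs⟩ := hA
    exact ⟨s, hs, ih s hs A hAs A' h⟩

/-- the natural map `i : X → E(X,B)`, `x ↦ [{x}]`, is injective and its
image is dense in `E(X,B) \ {[∅]}`. -/
theorem stmt4 {X : Type u} [TopologicalSpace X] [T0Space X]
    (B : Set (Set X)) (hB : IsMonoidalBase B) :
    Function.Injective (expI B) ∧
    ∀ q : ExpSpace B, q ≠ expMk B (∅ : Set X) →
      q ∈ closure (Set.range (expI B)) := by
  constructor
  · intro x y hxy
    have hrel : (ExpSetoid B).r {x} {y} := Quotient.exact hxy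
    have hins : Inseparable x y := by
      rw [inseparable_iff_forall_isOpen]
      intro V hV
      constructor
      · intro hx
        obtain ⟨U, hU, hxU, hUV⟩ := hB.is_base V hV x hx
        have hop : (ExpTop B).IsOpen {A : Set X | A ⊆ U} :=
          TopologicalSpace.GenerateOpen.basic _ ⟨U, hU, rfl⟩
        have := (hrel _ hop).mp (by simpa using hxU)
        exact hUV (by simpa using this)
      · intro hy
        obtain ⟨U, hU, hyU, hUV⟩ := hB.is_base V hV y hy
        have hop : (ExpTop B).IsOpen {A : Set X | A ⊆ U} :=
          TopologicalSpace.GenerateOpen.basic _ ⟨U, hU, rfl⟩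
        have := (hrel _ hop).mpr (by simpa using hyU)
        exact hUV (by simpa using this)
    exact hins.eq
  · intro q hq
    obtain ⟨A, rfl⟩ := Quotient.exists_rep q
    have hA : A ≠ ∅ := by
      rintro rfl
      exact hq rfl
    obtain ⟨x, hx⟩ := Set.nonempty_iff_ne_empty.mpr hA
    apply mem_closure_iff.mpr
    intro o ho hqo
    have hpre : (ExpTop B).IsOpen (expMk B ⁻¹' o) := ho
    have hAo : A ∈ expMk B ⁻¹' o := hqo
    have hxo : ({x} : Set X) ∈ expMk B ⁻¹' o :=
      expTop_down hpre A hAo {x} (by simpa using hx)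
    exact ⟨expI B x, hxo, ⟨x, rfl⟩⟩
end

section
/- Let X be a T₀ space with a monoidal base B. Then E(X,B) with the base B̃, equipped with its specialization order, is an 𝕄-complete join semilattice; moreover, for any family of subsets A_λ ⊆ X (λ ∈ Λ), the supremum of {[A_λ] : λ ∈ Λ} in E(X,B) is [⋃_{λ ∈ Λ} A_λ]. -/
open Set Topology TopologicalSpace

universe u v

section ExpAux

set_option linter.unusedSectionVars false

variable {X : Type u} [TopologicalSpace X] {B : Set (Set X)}

lemma isOpen_pow {U : Set X} (hU : U ∈ B) : (ExpTop B).IsOpen {A : Set X | A ⊆ U} :=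
  TopologicalSpace.GenerateOpen.basic _ ⟨U, hU, rfl⟩

lemma setoid_of_base {A A' : Set X} (h : ∀ U ∈ B, (A ⊆ U ↔ A' ⊆ U)) :
    (ExpSetoid B).r A A' := by
  intro s hs
  have hs' : TopologicalSpace.GenerateOpen {s : Set (Set X) | ∃ U ∈ B, s = {A : Set X | A ⊆ U}} s := hs
  clear hs
  induction hs' with
  | basic t ht => obtain ⟨U, hU, rfl⟩ := ht; exact h U hU
  | univ => simp
  | inter t1 t2 h1 h2 ih1 ih2 => exact and_congr ih1 ih2
  | sUnion S hS ih =>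
      constructor
      · rintro ⟨t, htS, hAt⟩; exact ⟨t, htS, (ih t htS).mp hAt⟩
      · rintro ⟨t, htS, hAt⟩; exact ⟨t, htS, (ih t htS).mpr hAt⟩

lemma exp_basis (hB : IsMonoidalBase B) {s : Set (Set X)} (hs : (ExpTop B).IsOpen s) :
    ∀ A ∈ s, ∃ U ∈ B, A ⊆ U ∧ {A' : Set X | A' ⊆ U} ⊆ s := by
  have hs' : TopologicalSpace.GenerateOpen {s : Set (Set X) | ∃ U ∈ B, s = {A : Set X | A ⊆ U}} s := hs
  clear hs
  induction hs' with
  | basic t ht =>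
      obtain ⟨U, hU, rfl⟩ := ht
      exact fun A hA => ⟨U, hU, hA, subset_rfl⟩
  | univ => exact fun A _ => ⟨Set.univ, hB.univ_mem, Set.subset_univ A, fun _ _ => trivial⟩
  | inter t1 t2 h1 h2 ih1 ih2 =>
      rintro A ⟨hA1, hA2⟩
      obtain ⟨U1, hU1, hAU1, h1s⟩ := ih1 A hA1
      obtain ⟨U2, hU2, hAU2, h2s⟩ := ih2 A hA2
      exact ⟨U1 ∩ U2, hB.inter_mem _ hU1 _ hU2, Set.subset_inter hAU1 hAU2,
        fun A' hA' => ⟨h1s (hA'.trans Set.inter_subset_left),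
          h2s (hA'.trans Set.inter_subset_right)⟩⟩
  | sUnion S hS ih =>
      rintro A ⟨t, htS, hAt⟩
      obtain ⟨U, hU, hAU, hts⟩ := ih t htS A hAt
      exact ⟨U, hU, hAU, fun A' hA' => ⟨t, htS, hts hA'⟩⟩

lemma mem_expBasic {U : Set X} (hU : U ∈ B) {A : Set X} :
    expMk B A ∈ expBasic B U ↔ A ⊆ U := by
  constructor
  · rintro ⟨A', hq, hA'⟩
    have hrel : (ExpSetoid B).r A A' := Quotient.exact hq
    exact (hrel {A : Set X | A ⊆ U} (isOpen_pow hU)).mpr hA'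
  · exact fun h => ⟨A, rfl, h⟩

lemma preimage_expBasic {U : Set X} (hU : U ∈ B) :
    expMk B ⁻¹' expBasic B U = {A : Set X | A ⊆ U} := by
  ext A; exact mem_expBasic hU

lemma isOpen_expBasic {U : Set X} (hU : U ∈ B) : IsOpen (expBasic B U) := by
  show (ExpTop B).IsOpen (expMk B ⁻¹' expBasic B U)
  rw [preimage_expBasic hU]
  exact isOpen_pow hU

lemma specLE_iff (hB : IsMonoidalBase B) {A A' : Set X} :
    specLE (expMk B A) (expMk B A') ↔ ∀ U ∈ B, A' ⊆ U → A ⊆ U := by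
  rw [specLE, mem_closure_iff]
  constructor
  · intro h U hU hA'
    obtain ⟨q, hqo, hq⟩ := h (expBasic B U) (isOpen_expBasic hU) ((mem_expBasic hU).mpr hA')
    rw [Set.mem_singleton_iff] at hq
    subst hq
    exact (mem_expBasic hU).mp hqo
  · intro h o ho hmem
    have hW : (ExpTop B).IsOpen (expMk B ⁻¹' o) := ho
    obtain ⟨U, hU, hA'U, hpow⟩ := exp_basis hB hW A' hmem
    exact ⟨expMk B A, hpow (h U hU hA'U), rfl⟩

end ExpAux

/-- `E(X,B)` with the base `B̃` and its specialization order is an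
𝕄-complete join semilattice, in which the supremum of `{[A_λ]}` is `[⋃_λ A_λ]`. -/
theorem stmt5 {X : Type u} [TopologicalSpace X] [T0Space X]
    (B : Set (Set X)) (hB : IsMonoidalBase B) :
    IsMonoidalBase (expBase B) ∧
    IsMCJSWith (expBase B) (specLE (Y := ExpSpace B)) (expSup B) ∧
    ∀ 𝒜 : Set (Set X), expSup B (expMk B '' 𝒜) = expMk B (⋃₀ 𝒜) := by
  -- key: membership of the sup in a basic open
  have sup_mem : ∀ (S : Set (ExpSpace B)) (U : Set X), U ∈ B →
      (expSup B S ∈ expBasic B U ↔ ∀ q ∈ S, q ∈ expBasic B U) := by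
    intro S U hU
    rw [expSup, mem_expBasic hU, Set.sUnion_subset_iff]
    constructor
    · intro h q hq
      induction q using Quotient.ind with
      | _ A => exact (mem_expBasic hU).mpr (h A hq)
    · intro h A hA
      exact (mem_expBasic hU).mp (h _ hA)
  refine ⟨?_, ⟨?_, ?_, ?_, ?_, ?_⟩, ?_⟩
  · -- expBase is a monoidal base
    refine ⟨?_, ?_, ?_, ?_⟩
    · rintro s ⟨U, hU, rfl⟩; exact isOpen_expBasic hU
    · intro V hV q hq
      induction q using Quotient.ind with
      | _ A =>
        have hW : (ExpTop B).IsOpen (expMk B ⁻¹' V) := hV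
        obtain ⟨U, hU, hAU, hpow⟩ := exp_basis hB hW A hq
        refine ⟨expBasic B U, ⟨U, hU, rfl⟩, (mem_expBasic hU).mpr hAU, ?_⟩
        rintro q' ⟨A', rfl, hA'⟩
        exact hpow hA'
    · refine ⟨Set.univ, hB.univ_mem, ?_⟩
      ext q
      induction q using Quotient.ind with
      | _ A =>
        refine iff_of_true (Set.mem_univ _) ?_
        exact ⟨A, rfl, Set.subset_univ A⟩
    · rintro s ⟨U, hU, rfl⟩ t ⟨V, hV, rfl⟩
      refine ⟨U ∩ V, hB.inter_mem _ hU _ hV, ?_⟩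
      ext q
      induction q using Quotient.ind with
      | _ A =>
        show expMk B A ∈ expBasic B U ∧ expMk B A ∈ expBasic B V ↔
          expMk B A ∈ expBasic B (U ∩ V)
        rw [mem_expBasic hU, mem_expBasic hV, mem_expBasic (hB.inter_mem _ hU _ hV),
          Set.subset_inter_iff]
  · -- refl
    intro q; exact subset_closure rfl
  · -- trans
    intro x y z hxy hyz
    exact closure_minimal (Set.singleton_subset_iff.mpr hxy) isClosed_closure hyz
  · -- antisymm
    intro x y hxy hyx
    induction x using Quotient.ind with
    | _ A =>
      induction y using Quotient.ind with
      | _ A' =>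
        have h1 := (specLE_iff hB).mp hxy
        have h2 := (specLE_iff hB).mp hyx
        exact Quotient.sound (setoid_of_base fun U hU => ⟨fun h => h2 U hU h, fun h => h1 U hU h⟩)
  · -- sup is a least upper bound
    intro S
    constructor
    · intro a ha
      induction a using Quotient.ind with
      | _ A =>
        refine (specLE_iff hB (A := A) (A' := ⋃₀ {A : Set X | expMk B A ∈ S})).mpr ?_
        intro U hU hsub
        have hmem : A ∈ {A : Set X | expMk B A ∈ S} := ha
        exact (Set.subset_sUnion_of_mem hmem).trans hsub
    · intro b hb
      induction b using Quotient.ind with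
      | _ Ab =>
        refine (specLE_iff hB (A := ⋃₀ {A : Set X | expMk B A ∈ S}) (A' := Ab)).mpr ?_
        intro U hU hAbU
        rw [Set.sUnion_subset_iff]
        intro A hA
        exact (specLE_iff hB).mp (hb _ hA) U hU hAbU
  · -- base condition
    rintro S u ⟨U, hU, rfl⟩
    rw [sup_mem S U hU]
    rfl
  · -- sup of image is class of union
    intro 𝒜
    refine Quotient.sound (setoid_of_base fun U hU => ?_)
    rw [Set.sUnion_subset_iff, Set.sUnion_subset_iff]
    constructor
    · intro h A' hA'
      exact h A' ⟨A', hA', rfl⟩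
    · intro h A hA
      obtain ⟨A', hA', heq⟩ := hA
      have hrel : (ExpSetoid B).r A' A := Quotient.exact heq
      exact (hrel {A : Set X | A ⊆ U} (isOpen_pow hU)).mp (h A' hA')
end

section
/- Let X be a T₀ space with monoidal base B, and let θ : X → Y be a function to a T₀ space Y with monoidal base C such that θ⁻¹(V) ∈ B for all V ∈ C, where (Y, C) is an 𝕄-complete join semilattice. Then there exists a unique function θ̂ : E(X,B) → Y such that θ̂⁻¹(V) ∈ B̃ for all V ∈ C, θ̂ preserves arbitrary suprema, and θ̂ ∘ i = θ, where i : X → E(X,B) is the natural map x ↦ [{x}]. Explicitly, θ̂([A]) = sup θ(A) for all A ⊆ X. -/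
open Set Topology TopologicalSpace

universe u v

theorem expOpen_basic {X : Type u} {B : Set (Set X)} {U : Set X} (hU : U ∈ B) :
    (ExpTop B).IsOpen {A : Set X | A ⊆ U} :=
  TopologicalSpace.GenerateOpen.basic _ ⟨U, hU, rfl⟩

theorem expRel_iff {X : Type u} {B : Set (Set X)} {A A' : Set X} :
    (ExpSetoid B).r A A' ↔ ∀ U ∈ B, (A ⊆ U ↔ A' ⊆ U) := by
  constructor
  · intro h U hU
    exact h _ (expOpen_basic hU)
  · intro h s hs
    induction hs with
    | basic t ht => obtain ⟨U, hU, rfl⟩ := ht; exact h U hU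
    | univ => simp
    | inter t1 t2 _ _ ih1 ih2 => simp only [Set.mem_inter_iff, ih1, ih2]
    | sUnion S _ ih =>
      constructor
      · rintro ⟨t, htS, hmem⟩; exact ⟨t, htS, (ih t htS).mp hmem⟩
      · rintro ⟨t, htS, hmem⟩; exact ⟨t, htS, (ih t htS).mpr hmem⟩

theorem expMk_mem_basic {X : Type u} {B : Set (Set X)} {U : Set X} (hU : U ∈ B) {A : Set X} :
    expMk B A ∈ expBasic B U ↔ A ⊆ U := by
  constructor
  · rintro ⟨A', hEq, hsub⟩
    exact (expRel_iff.mp (Quotient.exact hEq) U hU).mpr hsub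
  · intro h; exact ⟨A, rfl, h⟩

theorem eq_of_base {Y : Type v} [TopologicalSpace Y] [T0Space Y] {C : Set (Set Y)}
    (hC : IsMonoidalBase C) {y y' : Y} (h : ∀ V ∈ C, y ∈ V ↔ y' ∈ V) : y = y' := by
  apply Inseparable.eq
  rw [inseparable_iff_forall_isOpen]
  intro s hs
  constructor
  · intro hy
    obtain ⟨V, hVC, hyV, hVs⟩ := hC.is_base s hs y hy
    exact hVs ((h V hVC).mp hyV)
  · intro hy
    obtain ⟨V, hVC, hyV, hVs⟩ := hC.is_base s hs y' hy
    exact hVs ((h V hVC).mpr hyV)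

/-- universal property of the exponential: a morphism `θ : (X,B) → (Y,C)`
into an 𝕄-complete join semilattice factors uniquely through `i : X → E(X,B)` via a
suprema-preserving morphism `θ̂`, given explicitly by `θ̂([A]) = sup θ(A)`. -/
theorem stmt6 {X : Type u} {Y : Type v} [TopologicalSpace X] [T0Space X]
    [TopologicalSpace Y] [T0Space Y]
    (B : Set (Set X)) (hB : IsMonoidalBase B)
    (C : Set (Set Y)) (hC : IsMonoidalBase C)
    (le : Y → Y → Prop) (sY : Set Y → Y) (hY : IsMCJSWith C le sY)
    (θ : X → Y) (hθ : ∀ V ∈ C, θ ⁻¹' V ∈ B) :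
    (∃! θh : ExpSpace B → Y,
      (∀ V ∈ C, θh ⁻¹' V ∈ expBase B) ∧
      (∀ S : Set (ExpSpace B), θh (expSup B S) = sY (θh '' S)) ∧
      θh ∘ expI B = θ) ∧
    (∀ θh : ExpSpace B → Y,
      ((∀ V ∈ C, θh ⁻¹' V ∈ expBase B) ∧
        (∀ S : Set (ExpSpace B), θh (expSup B S) = sY (θh '' S)) ∧
        θh ∘ expI B = θ) →
      ∀ A : Set X, θh (expMk B A) = sY (θ '' A)) := by
  obtain ⟨hrefl, htrans, hanti, hsup, hmemC⟩ := hY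
  have key : ∀ A : Set X, ∀ V ∈ C, (sY (θ '' A) ∈ V ↔ A ⊆ θ ⁻¹' V) := by
    intro A V hV
    rw [← hmemC _ _ hV, Set.image_subset_iff]
  have wd : ∀ A A' : Set X, (ExpSetoid B).r A A' → sY (θ '' A) = sY (θ '' A') := by
    intro A A' h
    apply eq_of_base hC
    intro V hV
    rw [key A V hV, key A' V hV]
    exact expRel_iff.mp h _ (hθ V hV)
  set θh : ExpSpace B → Y := Quotient.lift (fun A => sY (θ '' A)) wd with hθh
  have hθhmk : ∀ A : Set X, θh (expMk B A) = sY (θ '' A) := fun A => rfl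
  have ssingle : ∀ y : Y, sY {y} = y := by
    intro y
    refine hanti _ _ ((hsup {y}).2 y ?_) ((hsup {y}).1 y rfl)
    intro a ha
    rw [ha]; exact hrefl y
  -- the three properties for θh
  have hp1 : ∀ V ∈ C, θh ⁻¹' V ∈ expBase B := by
    intro V hV
    refine ⟨θ ⁻¹' V, hθ V hV, ?_⟩
    ext q
    induction q using Quotient.ind with
    | _ A =>
      show θh (expMk B A) ∈ V ↔ _
      rw [hθhmk, key A V hV]
      exact (expMk_mem_basic (hθ V hV)).symm
  have hp2 : ∀ S : Set (ExpSpace B), θh (expSup B S) = sY (θh '' S) := by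
    intro S
    apply eq_of_base hC
    intro V hV
    rw [show θh (expSup B S) = sY (θ '' (⋃₀ {A : Set X | expMk B A ∈ S})) from rfl,
      key _ V hV, ← hmemC _ _ hV]
    constructor
    · intro h q hq
      obtain ⟨p, hpS, rfl⟩ := hq
      induction p using Quotient.ind with
      | _ A =>
        show θh (expMk B A) ∈ V
        rw [hθhmk, key A V hV]
        intro x hx
        exact h ⟨A, hpS, hx⟩
    · rintro h x ⟨A, hAS, hxA⟩
      have := h ⟨expMk B A, hAS, rfl⟩
      rw [hθhmk, key A V hV] at this
      exact this hxA
  have hp3 : θh ∘ expI B = θ := by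
    funext x
    show θh (expMk B {x}) = θ x
    rw [hθhmk, Set.image_singleton, ssingle]
  -- key equation for uniqueness
  have huniq : ∀ g : ExpSpace B → Y,
      ((∀ V ∈ C, g ⁻¹' V ∈ expBase B) ∧
        (∀ S : Set (ExpSpace B), g (expSup B S) = sY (g '' S)) ∧
        g ∘ expI B = θ) →
      ∀ A : Set X, g (expMk B A) = sY (θ '' A) := by
    rintro g ⟨_, hg2, hg3⟩ A
    have hrep : expMk B A = expSup B (expI B '' A) := by
      apply Quotient.sound
      apply expRel_iff.mpr
      intro U hU
      have hAsub : A ⊆ ⋃₀ {A' : Set X | expMk B A' ∈ expI B '' A} := by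
        intro x hx
        exact ⟨{x}, ⟨x, hx, rfl⟩, rfl⟩
      constructor
      · intro hAU z hz
        obtain ⟨A', hA', hzA'⟩ := hz
        obtain ⟨x, hxA, hx⟩ := hA'
        have hsingle : ({x} : Set X) ⊆ U := by simp [hAU hxA]
        exact (expRel_iff.mp (Quotient.exact hx) U hU).mp hsingle hzA' 
      · intro h
        exact fun x hx => h (hAsub hx)
    rw [hrep, hg2]
    congr 1
    rw [← Set.image_comp, hg3]
  refine ⟨⟨θh, ⟨hp1, hp2, hp3⟩, ?_⟩, huniq⟩
  intro g hg
  funext q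
  induction q using Quotient.ind with
  | _ A => rw [show Quotient.mk (ExpSetoid B) A = expMk B A from rfl, huniq g hg A, hθhmk]
end

section
/- Let X be a T₀ space with monoidal base B. Then the natural map i : E(X,B) → E(E(X,B), B̃) is an isomorphism of spaces with monoidal bases: it is a bijection, i⁻¹(W) ∈ B̃ for every W in the monoidal base of E(E(X,B), B̃), and the inverse map pulls back elements of B̃ to elements of the monoidal base of E(E(X,B), B̃). In particular, E² = E. -/
open Set Topology TopologicalSpace

universe u v

section Aux

variable {Z : Type*}

lemma aux_open_iff (C : Set (Set Z)) {A A' : Set Z}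
    (h : ∀ V ∈ C, (A ⊆ V ↔ A' ⊆ V)) :
    ∀ s : Set (Set Z), (ExpTop C).IsOpen s → (A ∈ s ↔ A' ∈ s) := by
  intro s hs
  have hs' : TopologicalSpace.GenerateOpen
      {s : Set (Set Z) | ∃ U ∈ C, s = {A : Set Z | A ⊆ U}} s := hs
  clear hs
  induction hs' with
  | basic t ht => obtain ⟨V, hV, rfl⟩ := ht; exact h V hV
  | univ => simp
  | inter s t _ _ ihs iht => simp only [Set.mem_inter_iff, ihs, iht]
  | sUnion T _ ih =>
      simp only [Set.mem_sUnion]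
      exact exists_congr fun t => and_congr_right fun ht => ih t ht

lemma expMk_eq_iff (C : Set (Set Z)) (A A' : Set Z) :
    expMk C A = expMk C A' ↔ ∀ V ∈ C, (A ⊆ V ↔ A' ⊆ V) := by
  constructor
  · intro h V hV
    exact Quotient.exact h {A : Set Z | A ⊆ V}
      (TopologicalSpace.GenerateOpen.basic _ ⟨V, hV, rfl⟩)
  · intro h
    exact Quotient.sound (aux_open_iff C h)

lemma mem_expBasic_s7 (C : Set (Set Z)) {V : Set Z} (hV : V ∈ C) (A : Set Z) :
    expMk C A ∈ expBasic C V ↔ A ⊆ V := by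
  constructor
  · rintro ⟨A', hAA', hA'⟩
    exact ((expMk_eq_iff C A A').mp hAA' V hV).mpr hA'
  · intro h; exact ⟨A, rfl, h⟩

/-- For `V ∈ C`, a family `S` is contained in `Ṽ` iff the union of its representatives
is contained in `V`. -/
lemma sub_expBasic_iff (C : Set (Set Z)) {V : Set Z} (hV : V ∈ C)
    (S : Set (ExpSpace C)) :
    S ⊆ expBasic C V ↔ ⋃₀ {A : Set Z | expMk C A ∈ S} ⊆ V := by
  constructor
  · rintro hS x ⟨A, hA, hxA⟩
    exact (mem_expBasic_s7 C hV A).mp (hS hA) hxA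
  · intro h q hq
    obtain ⟨A, rfl⟩ := Quotient.exists_rep q
    exact (mem_expBasic_s7 C hV A).mpr fun x hx => h ⟨A, hq, hx⟩

/-- The key representation: every class in `E(E(X,B))` is the class of a singleton. -/
lemma expMk_singleton_expSup (C : Set (Set Z)) (S : Set (ExpSpace C)) :
    expMk (expBase C) {expSup C S} = expMk (expBase C) S := by
  rw [expMk_eq_iff]
  rintro W ⟨U, hU, rfl⟩
  rw [Set.singleton_subset_iff, expSup, mem_expBasic_s7 C hU,
    sub_expBasic_iff C hU]

end Aux

/-- `E² = E`: the natural map `i : E(X,B) → E(E(X,B), B̃)` is an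
isomorphism of spaces with monoidal bases: a bijection pulling back base elements to base
elements, whose inverse does the same (equivalently, `i` maps base elements to base
elements). -/
theorem stmt7 {X : Type u} [TopologicalSpace X] [T0Space X]
    (B : Set (Set X)) (hB : IsMonoidalBase B) :
    Function.Bijective (expI (expBase B)) ∧
    (∀ W ∈ expBase (expBase B), expI (expBase B) ⁻¹' W ∈ expBase B) ∧
    (∀ U ∈ expBase B, expI (expBase B) '' U ∈ expBase (expBase B)) := by
  set C := expBase B with hC
  refine ⟨⟨?_, ?_⟩, ?_, ?_⟩
  · -- injective
    intro q q' h
    obtain ⟨A, rfl⟩ := Quotient.exists_rep q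
    obtain ⟨A', rfl⟩ := Quotient.exists_rep q'
    have h' := (expMk_eq_iff C {Quotient.mk _ A} {Quotient.mk _ A'}).mp h
    refine Quotient.sound (aux_open_iff B fun U hU => ?_)
    have := h' (expBasic B U) ⟨U, hU, rfl⟩
    replace this : expMk B A ∈ expBasic B U ↔ expMk B A' ∈ expBasic B U :=
      Set.singleton_subset_iff.symm.trans (this.trans Set.singleton_subset_iff)
    rw [← mem_expBasic_s7 B hU A, ← mem_expBasic_s7 B hU A']
    exact this
  · -- surjective
    intro p
    obtain ⟨S, rfl⟩ := Quotient.exists_rep p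
    exact ⟨expSup B S, expMk_singleton_expSup B S⟩
  · -- preimage of base sets
    rintro W ⟨V, hV, rfl⟩
    obtain ⟨U, hU, rfl⟩ := hV
    refine ⟨U, hU, ?_⟩
    ext q
    simp only [Set.mem_preimage, expI]
    rw [mem_expBasic_s7 C ⟨U, hU, rfl⟩, Set.singleton_subset_iff]
  · -- image of base sets
    rintro V hV
    refine ⟨V, hV, ?_⟩
    ext p
    constructor
    · rintro ⟨q, hq, rfl⟩
      exact (mem_expBasic_s7 C hV {q}).mpr (Set.singleton_subset_iff.mpr hq)
    · intro hp
      obtain ⟨S, rfl⟩ := Quotient.exists_rep p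
      have hS : S ⊆ V := (mem_expBasic_s7 C hV S).mp hp
      obtain ⟨U, hU, rfl⟩ := hV
      refine ⟨expSup B S, ?_, expMk_singleton_expSup B S⟩
      rw [expSup, mem_expBasic_s7 B hU, ← sub_expBasic_iff B hU]
      exact hS
end

section
/- Let X be a T₀ space with a monoidal base B such that (X, B) is an 𝕄-complete join semilattice. Then an open subset U ⊆ X is a blob if and only if U ∈ B. -/
open Set Topology TopologicalSpace

universe u v

/-- the blob lemma: if `(X,B)` is an 𝕄-complete join semilattice, then
an open subset of `X` is a blob iff it belongs to `B`. -/
theorem stmt8 {X : Type u} [TopologicalSpace X] [T0Space X]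
    (B : Set (Set X)) (hB : IsMonoidalBase B) (hM : MCJS B)
    (U : Set X) (hU : IsOpen U) :
    IsBlob U ↔ U ∈ B := by
  obtain ⟨le, s, hrefl, htrans, hanti, hsup, hmem⟩ := hM
  constructor
  · rintro ⟨a, hA⟩
    have ha : a ∈ U := by rw [hA]; intro V hV; exact hV.2
    obtain ⟨W, hWB, haW, hWU⟩ := hB.is_base U hU a ha
    have hUW : U ⊆ W := by
      rw [hA]; exact sInter_subset_of_mem ⟨hB.open_mem W hWB, haW⟩
    rwa [Subset.antisymm hUW hWU]
  · intro hUB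
    refine ⟨s U, ?_⟩
    have haU : s U ∈ U := (hmem U U hUB).mp (subset_refl U)
    apply Subset.antisymm
    · intro x hx V hV
      obtain ⟨hVopen, haV⟩ := hV
      obtain ⟨W, hWB, haW, hWV⟩ := hB.is_base V hVopen _ haV
      exact hWV ((hmem U W hWB).mpr haW hx)
    · exact sInter_subset_of_mem ⟨hU, haU⟩
end

section
/- Let M be a commutative monoid, let (f_λ)_{λ ∈ Λ} be a family of elements of M and let g ∈ M. If ⋂_{λ ∈ Λ} D(f_λ) ⊆ D(g) in Spec(M), then there exist finitely many indices λ₁, …, λ_n ∈ Λ such that ⋂_{i=1}^n D(f_{λᵢ}) ⊆ D(g). Consequently, Spec(M) satisfies condition (*). -/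
open Set Topology TopologicalSpace

universe u v

/-- The saturation of the submonoid generated by `A`: all divisors of finite products
of elements of `A`. -/
def satCl {M : Type*} [CommMonoid M] (A : Set M) : Set M :=
  {m | ∃ l : List M, (∀ x ∈ l, x ∈ A) ∧ ∃ y, m * y = l.prod}

lemma mem_satCl_of_mem {M : Type*} [CommMonoid M] {A : Set M} {a : M} (ha : a ∈ A) :
    a ∈ satCl A :=
  ⟨[a], by simpa using ha, 1, by simp⟩

lemma satCl_prime {M : Type*} [CommMonoid M] (A : Set M) : IsMonoidPrime (satCl A)ᶜ := by
  refine ⟨?_, ?_, ?_⟩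
  · intro x hx m hxm
    rcases hxm with ⟨l, hl, y, hy⟩
    exact absurd ⟨l, hl, m * y, by rw [← mul_assoc]; exact hy⟩ hx
  · intro h
    exact h ⟨[], by simp, 1, by simp⟩
  · intro x y hx hy hxy
    rcases not_not.mp hx with ⟨l1, hl1, y1, hy1⟩
    rcases not_not.mp hy with ⟨l2, hl2, y2, hy2⟩
    refine hxy ⟨l1 ++ l2, ?_, y1 * y2, ?_⟩
    · intro z hz
      rcases List.mem_append.mp hz with h | h
      exacts [hl1 z h, hl2 z h]
    · rw [List.prod_append, ← hy1, ← hy2, mul_mul_mul_comm]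

/-- The generic point attached to a generating set `A`. -/
def satPt {M : Type*} [CommMonoid M] (A : Set M) : KatoSpec M :=
  ⟨(satCl A)ᶜ, satCl_prime A⟩

lemma prod_not_mem {M : Type*} [CommMonoid M] {q : KatoSpec M} (l : List M)
    (h : ∀ x ∈ l, x ∉ q.1) : l.prod ∉ q.1 := by
  induction l with
  | nil => simpa using q.2.2.1
  | cons a t ih =>
    rw [List.prod_cons]
    exact q.2.2.2 _ _ (h a (by simp)) (ih fun x hx => h x (by simp [hx]))

lemma key_not_mem {M : Type*} [CommMonoid M] {q : KatoSpec M} {g y : M} {l : List M}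
    (hgy : g * y = l.prod) (h : ∀ x ∈ l, x ∉ q.1) : g ∉ q.1 := by
  intro hg
  exact prod_not_mem l h (hgy ▸ q.2.1 g hg y)

lemma blob_eq {M : Type*} [CommMonoid M] (a : KatoSpec M) :
    ⋂₀ {U : Set (KatoSpec M) | IsOpen U ∧ a ∈ U} = {q | q.1 ⊆ a.1} := by
  apply Set.Subset.antisymm
  · intro q hq f hfq
    by_contra hfa
    exact (hq (KatoD f) ⟨TopologicalSpace.GenerateOpen.basic _ ⟨f, rfl⟩, hfa⟩) hfq
  · intro q hq U ⟨hUopen, haU⟩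
    induction hUopen with
    | basic s hs =>
      rcases hs with ⟨f, rfl⟩
      exact fun hfq => haU (hq hfq)
    | univ => trivial
    | inter s t _ _ ihs iht => exact ⟨ihs haU.1, iht haU.2⟩
    | sUnion C _ ih =>
      rcases haU with ⟨t, htC, hat⟩
      exact ⟨t, htC, ih t htC hat⟩

lemma list_range_lift {M : Type*} {ι : Type*} (f : ι → M) :
    ∀ l : List M, (∀ x ∈ l, x ∈ Set.range f) → ∃ li : List ι, l = li.map f := by
  intro l
  induction l with
  | nil => exact fun _ => ⟨[], rfl⟩
  | cons a t ih =>
    intro h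
    rcases h a (by simp) with ⟨i, rfl⟩
    rcases ih (fun x hx => h x (by simp [hx])) with ⟨li, rfl⟩
    exact ⟨i :: li, rfl⟩

/-- if an arbitrary intersection of basic opens `D(f_λ)` of `Spec(M)` is
contained in `D(g)`, then some finite subintersection already is; consequently `Spec(M)`
satisfies condition (*). -/
theorem stmt12 {M : Type u} [CommMonoid M] :
    (∀ (ι : Type v) (f : ι → M) (g : M), (⋂ i, KatoD (f i)) ⊆ KatoD g →
      ∃ s : Finset ι, (⋂ i ∈ s, KatoD (f i)) ⊆ KatoD g) ∧
    CondStar (KatoSpec M) := by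
  constructor
  · intro ι f g hsub
    classical
    have hp : satPt (Set.range f) ∈ ⋂ i, KatoD (f i) := by
      refine Set.mem_iInter.mpr fun i => ?_
      show ¬ f i ∈ (satCl (Set.range f))ᶜ
      exact not_not.mpr (mem_satCl_of_mem ⟨i, rfl⟩)
    have hg : g ∈ satCl (Set.range f) := not_not.mp (hsub hp)
    rcases hg with ⟨l, hl, y, hy⟩
    rcases list_range_lift f l hl with ⟨li, rfl⟩
    refine ⟨li.toFinset, fun q hq => ?_⟩
    refine key_not_mem hy fun x hx => ?_
    rcases List.mem_map.mp hx with ⟨i, hi, rfl⟩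
    have h2 : i ∈ li → q ∈ KatoD (f i) := by simpa using Set.mem_iInter.mp hq i
    exact h2 hi
  · intro S hS V hV hsub
    have hSa : ∀ U : Set (KatoSpec M), ∃ a : KatoSpec M,
        U ∈ S → U = {q | q.1 ⊆ a.1} := by
      intro U
      by_cases hU : U ∈ S
      · rcases (hS U hU).2 with ⟨a, ha⟩
        exact ⟨a, fun _ => ha.trans (blob_eq a)⟩
      · exact ⟨satPt ∅, fun h => absurd h hU⟩
    choose pt hpt using hSa
    set A : Set M := {m | ∃ U ∈ S, m ∉ (pt U).1} with hA
    have hUf : ∀ m : M, ∃ U : Set (KatoSpec M), m ∈ A → U ∈ S ∧ m ∉ (pt U).1 := by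
      intro m
      by_cases hm : m ∈ A
      · rcases hm with ⟨U, hUS, hmU⟩
        exact ⟨U, fun _ => ⟨hUS, hmU⟩⟩
      · exact ⟨∅, fun h => absurd h hm⟩
    choose Uf hUfS using hUf
    have hpS : satPt A ∈ ⋂₀ S := by
      intro U hU
      rw [hpt U hU]
      intro m hm
      by_contra h
      exact hm (mem_satCl_of_mem ⟨U, hU, h⟩)
    have hbasis := TopologicalSpace.isTopologicalBasis_of_subbasis
      (s := Set.range fun f : M => KatoD f) (t := KatoSpec.instTopologicalSpace M) rfl
    obtain ⟨W, hWmem, hpW, hWV⟩ := hbasis.exists_subset_of_mem_open (hsub hpS) hV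
    obtain ⟨Fs, ⟨hFsfin, hFssub⟩, rfl⟩ := hWmem
    have hw : ∀ w : Set (KatoSpec M), ∃ (g : M) (l : List M),
        w ∈ Fs → (∀ x ∈ l, x ∈ A) ∧ (∃ y, g * y = l.prod) ∧ KatoD g = w := by
      intro w
      by_cases hwF : w ∈ Fs
      · rcases hFssub hwF with ⟨g, rfl⟩
        have : g ∈ satCl A := not_not.mp (hpW (KatoD g) hwF)
        rcases this with ⟨l, hl, hy⟩
        exact ⟨g, l, fun _ => ⟨hl, hy, rfl⟩⟩
      · exact ⟨1, [], fun h => absurd h hwF⟩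
    choose gw lw hlw using hw
    set Tset : Set (Set (KatoSpec M)) := ⋃ w ∈ Fs, Uf '' {x | x ∈ lw w} with hT
    have hTfin : Tset.Finite :=
      Set.Finite.biUnion hFsfin fun w _ => (List.finite_toSet (lw w)).image Uf
    refine ⟨hTfin.toFinset, ?_, ?_⟩
    · rw [Set.Finite.coe_toFinset]
      rintro U hU
      simp only [hT, Set.mem_iUnion] at hU
      rcases hU with ⟨w, hwF, x, hx, rfl⟩
      exact (hUfS x ((hlw w hwF).1 x hx)).1
    · rw [Set.Finite.coe_toFinset]
      intro q hq
      refine hWV ?_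
      intro w hwF
      obtain ⟨hlA, ⟨y, hy⟩, hDg⟩ := hlw w hwF
      rw [← hDg]
      refine key_not_mem hy fun x hx => ?_
      have hxA : x ∈ A := hlA x hx
      have hUin : Uf x ∈ Tset := by
        simp only [hT, Set.mem_iUnion]
        exact ⟨w, hwF, x, hx, rfl⟩
      have hqU : q ∈ Uf x := hq _ hUin
      rw [hpt _ (hUfS x hxA).1] at hqU
      exact fun hxq => (hUfS x hxA).2 (hqU hxq)
end

section
/- Let M be a commutative monoid. Then every irreducible closed subset of Spec(M) is the closure of a unique point; that is, Spec(M) is sober. -/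
open Set Topology TopologicalSpace

universe u v

lemma katoD_one' {M : Type u} [CommMonoid M] : KatoD (1 : M) = Set.univ := by
  ext p; simpa [KatoD] using p.2.2.1

lemma katoD_mul' {M : Type u} [CommMonoid M] (f g : M) :
    KatoD (f * g) = KatoD f ∩ KatoD g := by
  ext p
  obtain ⟨hid, h1, hmul⟩ := p.2
  constructor
  · intro h
    refine ⟨fun hf => h (hid f hf g), fun hg => h ?_⟩
    simpa [mul_comm] using hid g hg f
  · rintro ⟨hf, hg⟩
    exact hmul f g hf hg

lemma katoBasis (M : Type u) [CommMonoid M] :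
    TopologicalSpace.IsTopologicalBasis (Set.range fun f : M => KatoD f) where
  exists_subset_inter := by
    rintro _ ⟨f, rfl⟩ _ ⟨g, rfl⟩ p hp
    exact ⟨KatoD (f * g), ⟨f * g, rfl⟩, by rw [katoD_mul']; exact hp,
      by rw [katoD_mul']⟩
  sUnion_eq := by
    apply Set.eq_univ_of_forall
    intro p
    exact ⟨KatoD 1, ⟨1, rfl⟩, by simp [katoD_one']⟩
  eq_generateFrom := rfl

lemma mem_closure_kato {M : Type u} [CommMonoid M] {p q : KatoSpec M} :
    q ∈ closure ({p} : Set (KatoSpec M)) ↔ p.1 ⊆ q.1 := by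
  rw [(katoBasis M).mem_closure_iff]
  constructor
  · intro h f hf
    by_contra hfq
    obtain ⟨r, hr1, hr2⟩ := h (KatoD f) ⟨f, rfl⟩ hfq
    rw [Set.mem_singleton_iff] at hr2
    subst hr2
    exact hr1 hf
  · rintro h _ ⟨f, rfl⟩ hq
    exact ⟨p, fun hfp => hq (h hfp), rfl⟩

/-- Lemma 3.4 of the paper: every irreducible closed subset of the Kato
spectrum of a commutative monoid is the closure of a unique point; i.e. `Spec(M)` is sober. -/
theorem stmt13 {M : Type u} [CommMonoid M] (C : Set (KatoSpec M))
    (hcl : IsClosed C) (hirr : IsIrreducible C) :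
    ∃! p : KatoSpec M, C = closure {p} := by
  have hDopen : ∀ f : M, IsOpen (KatoD (M := M) f) := fun f =>
    TopologicalSpace.GenerateOpen.basic _ ⟨f, rfl⟩
  -- the candidate generic point
  have hprime : IsMonoidPrime {f : M | ∀ q ∈ C, f ∈ q.1} := by
    refine ⟨fun x hx m q hq => q.2.1 x (hx q hq) m, ?_, ?_⟩
    · obtain ⟨q, hq⟩ := hirr.1
      intro h
      exact q.2.2.1 (h q hq)
    · intro x y hx hy h
      simp only [Set.mem_setOf_eq, not_forall] at hx hy
      obtain ⟨qx, hqx, hqx'⟩ := hx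
      obtain ⟨qy, hqy, hqy'⟩ := hy
      obtain ⟨q, hqC, hqx2, hqy2⟩ := hirr.2 (KatoD x) (KatoD y) (hDopen x) (hDopen y)
        ⟨qx, hqx, hqx'⟩ ⟨qy, hqy, hqy'⟩
      exact q.2.2.2 x y hqx2 hqy2 (h q hqC)
  set p : KatoSpec M := ⟨{f : M | ∀ q ∈ C, f ∈ q.1}, hprime⟩ with hp
  have hpC : p ∈ C := by
    by_contra hpc
    obtain ⟨_, ⟨f, rfl⟩, hpf, hsub⟩ :=
      (katoBasis M).exists_subset_of_mem_open (by exact hpc) hcl.isOpen_compl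
    simp only [KatoD, hp, Set.mem_setOf_eq, not_forall] at hpf
    obtain ⟨q, hqC, hqf⟩ : ∃ q ∈ C, f ∉ q.1 := by
      by_contra hne; push_neg at hne; exact hpf hne
    exact hsub hqf hqC
  have hCeq : C = closure {p} := by
    apply Set.Subset.antisymm
    · intro q hq
      rw [mem_closure_kato]
      intro f hf
      exact hf q hq
    · exact closure_minimal (Set.singleton_subset_iff.mpr hpC) hcl
  refine ⟨p, hCeq, ?_⟩
  intro y hy
  have h1 : p ∈ closure ({y} : Set (KatoSpec M)) := hy ▸ hpC
  have h2 : y ∈ closure ({p} : Set (KatoSpec M)) := hCeq ▸ (hy ▸ subset_closure rfl)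
  exact Subtype.ext (Set.Subset.antisymm (mem_closure_kato.mp h1) (mem_closure_kato.mp h2))
end
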